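/- For smooth positive solutions of the two-component system, the total energy E_σ = ∫ Σ_± (½ ρ_± |u_±|² + R_±/(γ_±−1) ρ_±^{γ_±}) dx satisfies the balance dE_σ/dt + D_σ + σ ∫ ρ₊ρ₋ |u₊ − u₋|² dx = 0, where D_σ = ∫ Σ_± (μ_±/2 |∇u_± + ∇ᵀu_±|² + λ_± |div u_±|²) dx. In particular, E_σ is nonincreasing in time. -/

import Mathlib

open MeasureTheory

abbrev V3 := Fin 3 → ℝ
abbrev P := ℝ × V3

noncomputable def dtd (f : P → ℝ) (p : P) : ℝ := fderiv ℝ f p (1, 0)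

noncomputable def dxd (i : Fin 3) (f : P → ℝ) (p : P) : ℝ :=
  fderiv ℝ f p ((0 : ℝ), Pi.single i 1)

def Q3 : Set V3 := Set.univ.pi fun _ => Set.Icc 0 1

noncomputable def divStress (μ lam : ℝ) (u : P → V3) (i : Fin 3) (p : P) : ℝ :=
  (∑ j, dxd j (fun q => μ * (dxd j (fun r => u r i) q + dxd i (fun r => u r j) q)) p)
    + dxd i (fun q => lam * ∑ j, dxd j (fun r => u r j) q) p

noncomputable def dd (v : P) (f : P → ℝ) (p : P) : ℝ := fderiv ℝ f p v

lemma dtd_eq (f : P → ℝ) : dtd f = dd (1, 0) f := rfl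
lemma dxd_eq (i : Fin 3) (f : P → ℝ) : dxd i f = dd ((0:ℝ), Pi.single i 1) f := rfl

section ddlemmas
variable {f g : P → ℝ} {p v : P} {c : ℝ}

lemma dd_mul (hf : DifferentiableAt ℝ f p) (hg : DifferentiableAt ℝ g p) :
    dd v (fun q => f q * g q) p = dd v f p * g p + f p * dd v g p := by
  simp only [dd, fderiv_fun_mul hf hg, ContinuousLinearMap.add_apply,
    ContinuousLinearMap.smul_apply, smul_eq_mul]
  ring

lemma dd_const_mul (hf : DifferentiableAt ℝ f p) :
    dd v (fun q => c * f q) p = c * dd v f p := by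
  simp [dd, fderiv_const_mul hf c]

lemma dd_add (hf : DifferentiableAt ℝ f p) (hg : DifferentiableAt ℝ g p) :
    dd v (fun q => f q + g q) p = dd v f p + dd v g p := by
  simp [dd, fderiv_fun_add hf hg]

lemma dd_sum {ι : Type*} (s : Finset ι) (F : ι → P → ℝ)
    (hF : ∀ i ∈ s, DifferentiableAt ℝ (F i) p) :
    dd v (fun q => ∑ i ∈ s, F i q) p = ∑ i ∈ s, dd v (F i) p := by
  simp [dd, fderiv_fun_sum hF]

lemma dd_rpow {ρ : P → ℝ} (hρ : DifferentiableAt ℝ ρ p) (hpos : 0 < ρ p) (γ : ℝ) :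
    dd v (fun q => Real.rpow (ρ q) γ) p = γ * Real.rpow (ρ p) (γ - 1) * dd v ρ p := by
  have h := (Real.hasDerivAt_rpow_const (p := γ) (Or.inl hpos.ne')).comp_hasFDerivAt p
    hρ.hasFDerivAt
  have : fderiv ℝ (fun q => ρ q ^ γ) p = (γ * ρ p ^ (γ - 1)) • fderiv ℝ ρ p := h.fderiv
  simp [dd, this]

lemma dd_sub (hf : DifferentiableAt ℝ f p) (hg : DifferentiableAt ℝ g p) :
    dd v (fun q => f q - g q) p = dd v f p - dd v g p := by
  simp [dd, fderiv_fun_sub hf hg]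

lemma dd_const : dd v (fun _ => c) p = 0 := by simp [dd]

lemma dd_sq (hf : DifferentiableAt ℝ f p) :
    dd v (fun q => f q ^ 2) p = 2 * f p * dd v f p := by
  have h : (fun q => f q ^ 2) = fun q => f q * f q := by funext q; ring
  rw [h, dd_mul hf hf]; ring

end ddlemmas

section smooth
variable {f g : P → ℝ} {v : P}

lemma contDiff_dd (hf : ContDiff ℝ (⊤ : ℕ∞) f) : ContDiff ℝ (⊤ : ℕ∞) (dd v f) := by
  have h1 : ContDiff ℝ (⊤ : ℕ∞) (fun p => fderiv ℝ f p) := hf.fderiv_right (by simp)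
  exact (ContinuousLinearMap.apply ℝ ℝ v).contDiff.comp h1

lemma contDiff_rpow_comp {ρ : P → ℝ} (hρ : ContDiff ℝ (⊤ : ℕ∞) ρ) (hpos : ∀ p, 0 < ρ p) (γ : ℝ) :
    ContDiff ℝ (⊤ : ℕ∞) (fun q => ρ q ^ γ) := by
  rw [contDiff_iff_contDiffAt]
  intro p
  exact (hρ.contDiffAt).rpow_const_of_ne (hpos p).ne'

lemma contDiff_comp_apply {u : P → V3} (hu : ContDiff ℝ (⊤ : ℕ∞) u) (i : Fin 3) :
    ContDiff ℝ (⊤ : ℕ∞) (fun q => u q i) :=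
  (ContinuousLinearMap.proj (R := ℝ) (φ := fun _ : Fin 3 => ℝ) i).contDiff.comp hu

lemma dd_periodic {f : P → ℝ} (hf : ContDiff ℝ (⊤ : ℕ∞) f)
    (hper : ∀ (t : ℝ) (x : V3) (i : Fin 3), f (t, x + Pi.single i 1) = f (t, x))
    (t : ℝ) (x : V3) (i : Fin 3) :
    dd v f (t, x + Pi.single i 1) = dd v f (t, x) := by
  set c : P := ((0:ℝ), Pi.single i 1) with hc
  have hpc : ∀ q : P, q + c = (q.1, q.2 + Pi.single i 1) := by
    intro q; simp [hc, Prod.ext_iff]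
  have hcomp : (fun q : P => f (q + c)) = f := by
    funext q; rw [hpc]; exact hper q.1 q.2 i
  have hfd : HasFDerivAt (fun q : P => f (q + c))
      ((fderiv ℝ f ((t, x) + c)).comp (ContinuousLinearMap.id ℝ P)) (t, x) := by
    exact (hf.differentiable (by simp) ((t,x) + c)).hasFDerivAt.comp (t, x)
      ((hasFDerivAt_id (t, x)).add_const c)
  rw [hcomp] at hfd
  have h1 := hfd.fderiv
  have h2 : ((t, x) + c : P) = (t, x + Pi.single i 1) := hpc (t, x)
  rw [h2] at h1
  simp only [dd, h1, ContinuousLinearMap.comp_apply, ContinuousLinearMap.id_apply]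
end smooth

section slice
variable {f : P → ℝ}

lemma hasDerivAt_slice (hf : ContDiff ℝ (⊤ : ℕ∞) f) (t : ℝ) (x : V3) :
    HasDerivAt (fun s => f (s, x)) (dtd f (t, x)) t := by
  have h1 : HasDerivAt (fun s : ℝ => (s, x) : ℝ → P) ((1 : ℝ), (0 : V3)) t := by
    simpa using (hasDerivAt_id t).prodMk (hasDerivAt_const t x)
  exact (hf.differentiable (by simp) (t, x)).hasFDerivAt.comp_hasDerivAt t h1

lemma hasFDerivAt_slice_x (hf : ContDiff ℝ (⊤ : ℕ∞) f) (t : ℝ) (x : V3) :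
    HasFDerivAt (fun y => f (t, y))
      ((fderiv ℝ f (t, x)).comp ((0 : V3 →L[ℝ] ℝ).prod (ContinuousLinearMap.id ℝ V3))) x := by
  have h1 : HasFDerivAt (fun y : V3 => ((t, y) : P))
      ((0 : V3 →L[ℝ] ℝ).prod (ContinuousLinearMap.id ℝ V3)) x := by
    apply HasFDerivAt.prodMk
    · exact hasFDerivAt_const t x
    · exact hasFDerivAt_id x
  exact (hf.differentiable (by simp) (t, x)).hasFDerivAt.comp x h1

lemma fderiv_slice_x (hf : ContDiff ℝ (⊤ : ℕ∞) f) (t : ℝ) (x : V3) (i : Fin 3) :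
    fderiv ℝ (fun y => f (t, y)) x (Pi.single i 1) = dxd i f (t, x) := by
  rw [(hasFDerivAt_slice_x hf t x).fderiv]
  rfl

lemma contDiff_slice_x (hf : ContDiff ℝ (⊤ : ℕ∞) f) (t : ℝ) :
    ContDiff ℝ (⊤ : ℕ∞) (fun y => f (t, y)) :=
  hf.comp ((contDiff_const.prodMk contDiff_id))

lemma continuous_slice_t (hf : ContDiff ℝ (⊤ : ℕ∞) f) (x : V3) :
    Continuous (fun s => f (s, x)) :=
  hf.continuous.comp (continuous_id.prodMk continuous_const)
end slice

lemma Q3_eq_Icc : Q3 = Set.Icc (0 : V3) 1 := by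
  rw [← Set.pi_univ_Icc]
  rfl

lemma isCompact_Q3 : IsCompact Q3 := by
  rw [Q3_eq_Icc]; exact isCompact_Icc

lemma measurableSet_Q3 : MeasurableSet Q3 :=
  MeasurableSet.univ_pi fun _ => measurableSet_Icc

/-- Integral of a divergence of a smooth periodic vector field over the unit cube vanishes. -/
lemma integral_divergence_zero (g : V3 → V3) (hg : ContDiff ℝ (⊤ : ℕ∞) g)
    (hper : ∀ (x : V3) (i : Fin 3), g (x + Pi.single i 1) = g x) :
    ∫ x in Q3, (∑ i, fderiv ℝ g x (Pi.single i 1) i) = 0 := by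
  rw [Q3_eq_Icc]
  have hle : (0 : V3) ≤ 1 := by intro i; norm_num
  have hdivcont : Continuous fun x => ∑ i : Fin 3, fderiv ℝ g x (Pi.single i 1) i := by
    apply continuous_finset_sum
    intro i _
    have h1 : Continuous fun x => fderiv ℝ g x := (hg.fderiv_right (m := (⊤ : ℕ∞)) (by simp)).continuous
    have h2 : Continuous fun x => fderiv ℝ g x (Pi.single i 1) :=
      ((ContinuousLinearMap.apply ℝ V3 (Pi.single i 1)).continuous).comp h1
    exact (continuous_apply i).comp h2
  have key := MeasureTheory.integral_divergence_of_hasFDerivAt_off_countable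
    (a := (0 : V3)) (b := 1) hle g (fderiv ℝ g) ∅ Set.countable_empty
    (hg.continuous.continuousOn)
    (fun x hx => (hg.differentiable (by simp) x).hasFDerivAt)
    (hdivcont.continuousOn.integrableOn_compact isCompact_Icc)
  rw [key]
  apply Finset.sum_eq_zero
  intro i _
  have hface : ∀ x : Fin 2 → ℝ, g (i.insertNth ((1:V3) i) x) i = g (i.insertNth ((0:V3) i) x) i := by
    intro x
    have h1 : (i.insertNth ((1:V3) i) x : V3) = (i.insertNth ((0:V3) i) x : V3) + (Pi.single i 1 : V3) := by
      funext j
      rcases eq_or_ne j i with rfl | hj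
      · simp
      · obtain ⟨k, rfl⟩ := Fin.exists_succAbove_eq hj
        simp [Pi.single_eq_of_ne (Fin.succAbove_ne i k)]
    rw [h1, hper]
  simp only [hface, sub_self]

lemma species_pointwise (K γ μ lam : ℝ)
    (ρ : P → ℝ) (u : P → V3) (g : P → ℝ) (S : Fin 3 → P → ℝ)
    (hρ : ContDiff ℝ (⊤ : ℕ∞) ρ) (hu : ContDiff ℝ (⊤ : ℕ∞) u)
    (hg : Differentiable ℝ g)
    (hgdd : ∀ (v : P) (p : P), dd v g p = γ * ρ p ^ (γ - 1) * dd v ρ p)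
    (hgval : ∀ p : P, g p = ρ p ^ (γ - 1) * ρ p)
    (hcont : ∀ p, dtd ρ p + ∑ i, dxd i (fun q => ρ q * u q i) p = 0)
    (hmom : ∀ (p : P) (i : Fin 3),
      dtd (fun q => ρ q * u q i) p
        + (∑ j, dxd j (fun q => ρ q * u q i * u q j) p)
        + dxd i (fun q => (K * (γ - 1)) * g q) p
      = divStress μ lam u i p + S i p)
    (p : P) :
    dtd (fun q => (1/2) * ρ q * (∑ i, u q i ^ 2) + K * g q) p
      + (∑ j, dxd j (fun q =>
          (1/2) * ρ q * (∑ i, u q i ^ 2) * u q j + (K * γ) * g q * u q j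
          - (∑ i, (μ * (dxd j (fun r => u r i) q + dxd i (fun r => u r j) q)) * u q i)
          - (lam * ∑ k, dxd k (fun r => u r k) q) * u q j) p)
      + (μ/2 * ∑ i, ∑ j, (dxd j (fun r => u r i) p + dxd i (fun r => u r j) p)^2
          + lam * (∑ j, dxd j (fun r => u r j) p)^2)
      = ∑ i, S i p * u p i := by
  have Dρ : Differentiable ℝ ρ := hρ.differentiable (by simp)
  have Du : ∀ i : Fin 3, Differentiable ℝ (fun r => u r i) := fun i =>
    (contDiff_comp_apply hu i).differentiable (by simp)
  have D2 : ∀ (w : P) (i : Fin 3), Differentiable ℝ (fun q => dd w (fun r => u r i) q) :=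
    fun w i => (contDiff_dd (contDiff_comp_apply hu i)).differentiable (by simp)
  have hc := hcont p
  have hm0 := hmom p 0; have hm1 := hmom p 1; have hm2 := hmom p 2
  simp only [divStress, Fin.sum_univ_three, dtd_eq, dxd_eq] at hc hm0 hm1 hm2 ⊢
  simp (disch := fun_prop) only [dd_mul, dd_add, dd_sub, dd_sq, dd_const,
    hgdd] at hc hm0 hm1 hm2 ⊢
  rw [hgval] at hm0 hm1 hm2 ⊢
  linear_combination (u p 0) * hm0 + (u p 1) * hm1 + (u p 2) * hm2
    + (K * γ * ρ p ^ (γ - 1) - (1/2) * (u p 0 ^ 2 + u p 1 ^ 2 + u p 2 ^ 2)) * hc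

lemma fderiv_pi_apply {g : V3 → V3} (hg : ∀ j, DifferentiableAt ℝ (fun x => g x j) x)
    (v : V3) (j : Fin 3) : fderiv ℝ g x v j = fderiv ℝ (fun x => g x j) x v := by
  have h : HasFDerivAt g (ContinuousLinearMap.pi fun j => fderiv ℝ (fun x => g x j) x) x :=
    hasFDerivAt_pi.mpr fun j => (hg j).hasFDerivAt
  rw [h.fderiv]
  simp

lemma integral_sum_dxd_zero (F : Fin 3 → P → ℝ) (hF : ∀ j, ContDiff ℝ (⊤ : ℕ∞) (F j))
    (hper : ∀ (j : Fin 3) (t : ℝ) (x : V3) (i : Fin 3),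
      F j (t, x + Pi.single i 1) = F j (t, x)) (t : ℝ) :
    ∫ x in Q3, (∑ j, dxd j (F j) (t, x)) = 0 := by
  set g : V3 → V3 := fun x j => F j (t, x) with hgdef
  have hgj : ∀ j, ContDiff ℝ (⊤ : ℕ∞) (fun x => g x j) := fun j => contDiff_slice_x (hF j) t
  have hg : ContDiff ℝ (⊤ : ℕ∞) g := contDiff_pi.mpr hgj
  have hperg : ∀ (x : V3) (i : Fin 3), g (x + Pi.single i 1) = g x := by
    intro x i; funext j; exact hper j t x i
  have key := integral_divergence_zero g hg hperg
  rw [← key]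
  apply setIntegral_congr_fun measurableSet_Q3
  intro x _
  apply Finset.sum_congr rfl
  intro i _
  rw [fderiv_pi_apply (fun j => ((hgj j).differentiable (by simp)).differentiableAt)]
  exact (fderiv_slice_x (hF i) t x i).symm

lemma hasDerivAt_setIntegral (f : P → ℝ) (hf : ContDiff ℝ (⊤ : ℕ∞) f) (t : ℝ) :
    HasDerivAt (fun s => ∫ x in Q3, f (s, x)) (∫ x in Q3, dtd f (t, x)) t := by
  have hdf : ContDiff ℝ (⊤ : ℕ∞) (dtd f) := by rw [dtd_eq]; exact contDiff_dd hf
  obtain ⟨C, hC⟩ : ∃ C, ∀ p ∈ (Set.Icc (t - 1) (t + 1)) ×ˢ (Set.Icc (0:V3) 1),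
      ‖dtd f p‖ ≤ C := by
    rcases (isCompact_Icc.prod isCompact_Icc).exists_bound_of_continuousOn
      hdf.continuous.continuousOn with ⟨C, hC⟩
    exact ⟨C, hC⟩
  haveI : IsFiniteMeasure (volume.restrict Q3) :=
    ⟨by rw [Measure.restrict_apply_univ]; exact isCompact_Q3.measure_lt_top⟩
  have key := hasDerivAt_integral_of_dominated_loc_of_deriv_le (μ := volume.restrict Q3)
    (F := fun s x => f (s, x)) (F' := fun s x => dtd f (s, x)) (x₀ := t)
    (bound := fun _ => |C| + 1) (Metric.ball_mem_nhds t one_pos)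
    (Filter.Eventually.of_forall fun s =>
      ((contDiff_slice_x hf s).continuous.aestronglyMeasurable))
    ((contDiff_slice_x hf t).continuous.continuousOn.integrableOn_compact isCompact_Q3)
    ((contDiff_slice_x hdf t).continuous.aestronglyMeasurable)
    ?_ (integrable_const _) ?_
  · exact key.2
  · rw [ae_restrict_iff' measurableSet_Q3]
    refine Filter.Eventually.of_forall fun x hx => fun s hs => ?_
    have hs' : s ∈ Set.Icc (t - 1) (t + 1) := by
      have := abs_lt.mp (by simpa [Real.dist_eq] using Metric.mem_ball.mp hs)
      constructor <;> linarith [this.1, this.2]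
    have hx' : x ∈ Set.Icc (0:V3) 1 := by rwa [← Q3_eq_Icc]
    calc ‖dtd f (s, x)‖ ≤ C := hC (s, x) ⟨hs', hx'⟩
      _ ≤ |C| + 1 := by cases abs_cases C <;> linarith
  · rw [ae_restrict_iff' measurableSet_Q3]
    exact Filter.Eventually.of_forall fun x _ => fun s _ => hasDerivAt_slice hf s x

lemma diss_nonneg {μ lam : ℝ} (hμ : 0 < μ) (hlam : 0 < 2 / 3 * μ + lam)
    (a : Fin 3 → Fin 3 → ℝ) :
    0 ≤ μ / 2 * ∑ i, ∑ j, (a i j + a j i) ^ 2 + lam * (∑ j, a j j) ^ 2 := by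
  simp only [Fin.sum_univ_three]
  nlinarith [sq_nonneg (a 0 0 - a 1 1), sq_nonneg (a 1 1 - a 2 2), sq_nonneg (a 0 0 - a 2 2),
    sq_nonneg (a 0 1 + a 1 0), sq_nonneg (a 0 2 + a 2 0), sq_nonneg (a 1 2 + a 2 1),
    sq_nonneg (a 0 0 + a 1 1 + a 2 2), hμ.le, hlam.le,
    mul_nonneg hμ.le (sq_nonneg (a 0 0 - a 1 1)), mul_nonneg hμ.le (sq_nonneg (a 1 1 - a 2 2)),
    mul_nonneg hμ.le (sq_nonneg (a 0 0 - a 2 2)),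
    mul_nonneg hμ.le (sq_nonneg (a 0 1 + a 1 0)), mul_nonneg hμ.le (sq_nonneg (a 0 2 + a 2 0)),
    mul_nonneg hμ.le (sq_nonneg (a 1 2 + a 2 1)),
    mul_nonneg hlam.le (sq_nonneg (a 0 0 + a 1 1 + a 2 2))]

noncomputable def enr (K γ : ℝ) (ρ : P → ℝ) (u : P → V3) : P → ℝ :=
  fun q => (1/2) * ρ q * (∑ i, u q i ^ 2) + K * Real.rpow (ρ q) γ

noncomputable def flx (K γ μ lam : ℝ) (ρ : P → ℝ) (u : P → V3) (j : Fin 3) : P → ℝ :=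
  fun q => (1/2) * ρ q * (∑ i, u q i ^ 2) * u q j + (K * γ) * Real.rpow (ρ q) γ * u q j
    - (∑ i, (μ * (dxd j (fun r => u r i) q + dxd i (fun r => u r j) q)) * u q i)
    - (lam * ∑ k, dxd k (fun r => u r k) q) * u q j

noncomputable def dsp (μ lam : ℝ) (u : P → V3) : P → ℝ :=
  fun p => μ/2 * ∑ i, ∑ j, (dxd j (fun r => u r i) p + dxd i (fun r => u r j) p)^2
    + lam * (∑ j, dxd j (fun r => u r j) p)^2

section species
variable {K γ μ lam : ℝ} {ρ : P → ℝ} {u : P → V3}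

lemma contDiff_dxd {f : P → ℝ} (hf : ContDiff ℝ (⊤ : ℕ∞) f) (i : Fin 3) :
    ContDiff ℝ (⊤ : ℕ∞) (fun q => dxd i f q) := contDiff_dd hf

lemma contDiff_enr (hρ : ContDiff ℝ (⊤ : ℕ∞) ρ) (hu : ContDiff ℝ (⊤ : ℕ∞) u) (hpos : ∀ p, 0 < ρ p) :
    ContDiff ℝ (⊤ : ℕ∞) (enr K γ ρ u) := by
  apply ContDiff.add
  · exact (contDiff_const.mul hρ).mul
      (ContDiff.sum fun i _ => (contDiff_comp_apply hu i).pow 2)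
  · exact contDiff_const.mul (contDiff_rpow_comp hρ hpos γ)

lemma contDiff_flx (hρ : ContDiff ℝ (⊤ : ℕ∞) ρ) (hu : ContDiff ℝ (⊤ : ℕ∞) u) (hpos : ∀ p, 0 < ρ p)
    (j : Fin 3) : ContDiff ℝ (⊤ : ℕ∞) (flx K γ μ lam ρ u j) := by
  apply ContDiff.sub
  apply ContDiff.sub
  apply ContDiff.add
  · exact ((contDiff_const.mul hρ).mul
      (ContDiff.sum fun i _ => (contDiff_comp_apply hu i).pow 2)).mul (contDiff_comp_apply hu j)
  · exact (contDiff_const.mul (contDiff_rpow_comp hρ hpos γ)).mul (contDiff_comp_apply hu j)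
  · exact ContDiff.sum fun i _ => (contDiff_const.mul
      ((contDiff_dxd (contDiff_comp_apply hu i) j).add
        (contDiff_dxd (contDiff_comp_apply hu j) i))).mul (contDiff_comp_apply hu i)
  · exact (contDiff_const.mul
      (ContDiff.sum fun k _ => contDiff_dxd (contDiff_comp_apply hu k) k)).mul
      (contDiff_comp_apply hu j)

lemma contDiff_dsp (hu : ContDiff ℝ (⊤ : ℕ∞) u) : ContDiff ℝ (⊤ : ℕ∞) (dsp μ lam u) := by
  apply ContDiff.add
  · exact contDiff_const.mul (ContDiff.sum fun i _ => ContDiff.sum fun j _ =>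
      ((contDiff_dxd (contDiff_comp_apply hu i) j).add
        (contDiff_dxd (contDiff_comp_apply hu j) i)).pow 2)
  · exact contDiff_const.mul
      ((ContDiff.sum fun k _ => contDiff_dxd (contDiff_comp_apply hu k) k).pow 2)

lemma flx_per (hρ : ContDiff ℝ (⊤ : ℕ∞) ρ) (hu : ContDiff ℝ (⊤ : ℕ∞) u)
    (hperρ : ∀ (t : ℝ) (x : V3) (i : Fin 3), ρ (t, x + Pi.single i 1) = ρ (t, x))
    (hperu : ∀ (t : ℝ) (x : V3) (i : Fin 3), u (t, x + Pi.single i 1) = u (t, x))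
    (j : Fin 3) (t : ℝ) (x : V3) (i : Fin 3) :
    flx K γ μ lam ρ u j (t, x + Pi.single i 1) = flx K γ μ lam ρ u j (t, x) := by
  have h2 : ∀ k : Fin 3, u (t, x + Pi.single i 1) k = u (t, x) k := fun k =>
    congrFun (hperu t x i) k
  have h3 : ∀ k l : Fin 3, dxd k (fun r => u r l) (t, x + Pi.single i 1)
      = dxd k (fun r => u r l) (t, x) := by
    intro k l
    rw [dxd_eq]
    exact dd_periodic (contDiff_comp_apply hu l) (fun t x i => congrFun (hperu t x i) l) t x i
  simp only [flx, hperρ t x i, h2, h3]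
end species

lemma species_main (K γ μ lam : ℝ) (ρ : P → ℝ) (u : P → V3) (S : Fin 3 → P → ℝ)
    (hρ : ContDiff ℝ (⊤ : ℕ∞) ρ) (hu : ContDiff ℝ (⊤ : ℕ∞) u) (hpos : ∀ p, 0 < ρ p)
    (hcont : ∀ p, dtd ρ p + ∑ i, dxd i (fun q => ρ q * u q i) p = 0)
    (hmom : ∀ (p : P) (i : Fin 3),
      dtd (fun q => ρ q * u q i) p
        + (∑ j, dxd j (fun q => ρ q * u q i * u q j) p)
        + dxd i (fun q => (K * (γ - 1)) * Real.rpow (ρ q) γ) p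
      = divStress μ lam u i p + S i p) (p : P) :
    dtd (enr K γ ρ u) p + (∑ j, dxd j (flx K γ μ lam ρ u j) p) + dsp μ lam u p
      = ∑ i, S i p * u p i := by
  have hgd : Differentiable ℝ (fun q => Real.rpow (ρ q) γ) :=
    (contDiff_rpow_comp hρ hpos γ).differentiable (by simp)
  have hgdd : ∀ (v p₁ : P), dd v (fun q => Real.rpow (ρ q) γ) p₁
      = γ * ρ p₁ ^ (γ - 1) * dd v ρ p₁ := fun v p₁ =>
    dd_rpow ((hρ.differentiable (by simp)) p₁) (hpos p₁) γ
  have hgval : ∀ p₁ : P, Real.rpow (ρ p₁) γ = ρ p₁ ^ (γ - 1) * ρ p₁ := by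
    intro p₁
    rw [← Real.rpow_add_one (hpos p₁).ne']
    norm_num
  exact species_pointwise K γ μ lam ρ u (fun q => Real.rpow (ρ q) γ) S hρ hu hgd hgdd hgval
    hcont hmom p

/-- Energy balance for smooth positive solutions of the two-component system:
`dE_σ/dt + D_σ + σ∫ρ₊ρ₋|u₊−u₋|² dx = 0`, and in particular `E_σ` is
nonincreasing in time. -/
theorem stmt6 (Rp Rm γp γm μp μm lamp lamm σ : ℝ)
    (hRp : 0 < Rp) (hRm : 0 < Rm) (hγp : 1 < γp) (hγm : 1 < γm)
    (hμp : 0 < μp) (hμm : 0 < μm)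
    (hlamp : 0 < 2 / 3 * μp + lamp) (hlamm : 0 < 2 / 3 * μm + lamm)
    (hσ : 0 < σ)
    (ρp ρm : P → ℝ) (up um : P → V3)
    (hρp : ContDiff ℝ (⊤ : ℕ∞) ρp) (hρm : ContDiff ℝ (⊤ : ℕ∞) ρm)
    (hup : ContDiff ℝ (⊤ : ℕ∞) up) (hum : ContDiff ℝ (⊤ : ℕ∞) um)
    (hposp : ∀ p, 0 < ρp p) (hposm : ∀ p, 0 < ρm p)
    (hperρp : ∀ (t : ℝ) (x : V3) (i : Fin 3), ρp (t, x + Pi.single i 1) = ρp (t, x))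
    (hperρm : ∀ (t : ℝ) (x : V3) (i : Fin 3), ρm (t, x + Pi.single i 1) = ρm (t, x))
    (hperup : ∀ (t : ℝ) (x : V3) (i : Fin 3), up (t, x + Pi.single i 1) = up (t, x))
    (hperum : ∀ (t : ℝ) (x : V3) (i : Fin 3), um (t, x + Pi.single i 1) = um (t, x))
    (hcontp : ∀ p, dtd ρp p + ∑ i, dxd i (fun q => ρp q * up q i) p = 0)
    (hcontm : ∀ p, dtd ρm p + ∑ i, dxd i (fun q => ρm q * um q i) p = 0)
    (hmomp : ∀ (p : P) (i : Fin 3),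
      dtd (fun q => ρp q * up q i) p
        + (∑ j, dxd j (fun q => ρp q * up q i * up q j) p)
        + dxd i (fun q => Rp * Real.rpow (ρp q) γp) p
      = divStress μp lamp up i p + σ * ρp p * ρm p * (um p i - up p i))
    (hmomm : ∀ (p : P) (i : Fin 3),
      dtd (fun q => ρm q * um q i) p
        + (∑ j, dxd j (fun q => ρm q * um q i * um q j) p)
        + dxd i (fun q => Rm * Real.rpow (ρm q) γm) p
      = divStress μm lamm um i p + σ * ρm p * ρp p * (up p i - um p i)) :
    ∀ E : ℝ → ℝ,
      (∀ t, E t = ∫ x in Q3,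
          ((1 / 2) * ρp (t, x) * (∑ i, up (t, x) i ^ 2)
            + Rp / (γp - 1) * Real.rpow (ρp (t, x)) γp
            + (1 / 2) * ρm (t, x) * (∑ i, um (t, x) i ^ 2)
            + Rm / (γm - 1) * Real.rpow (ρm (t, x)) γm)) →
      (∀ t, HasDerivAt E
        (-((∫ x in Q3,
            (μp / 2 * ∑ i, ∑ j, (dxd j (fun r => up r i) (t, x)
                + dxd i (fun r => up r j) (t, x)) ^ 2
              + lamp * (∑ j, dxd j (fun r => up r j) (t, x)) ^ 2
              + μm / 2 * ∑ i, ∑ j, (dxd j (fun r => um r i) (t, x)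
                + dxd i (fun r => um r j) (t, x)) ^ 2
              + lamm * (∑ j, dxd j (fun r => um r j) (t, x)) ^ 2))
          + σ * ∫ x in Q3,
              ρp (t, x) * ρm (t, x) * ∑ i, (up (t, x) i - um (t, x) i) ^ 2)) t)
      ∧ ∀ s t : ℝ, s ≤ t → E t ≤ E s := by
  intro E hE
  have hγp1 : γp - 1 ≠ 0 := sub_ne_zero.mpr hγp.ne'
  have hγm1 : γm - 1 ≠ 0 := sub_ne_zero.mpr hγm.ne'
  have hRp' : Rp = Rp / (γp - 1) * (γp - 1) := (div_mul_cancel₀ Rp hγp1).symm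
  have hRm' : Rm = Rm / (γm - 1) * (γm - 1) := (div_mul_cancel₀ Rm hγm1).symm
  rw [hRp'] at hmomp
  rw [hRm'] at hmomm
  have Hp := species_main (Rp / (γp - 1)) γp μp lamp ρp up
    (fun i q => σ * ρp q * ρm q * (um q i - up q i)) hρp hup hposp hcontp hmomp
  have Hm := species_main (Rm / (γm - 1)) γm μm lamm ρm um
    (fun i q => σ * ρm q * ρp q * (up q i - um q i)) hρm hum hposm hcontm hmomm
  -- total energy function
  have hEtotc : ContDiff ℝ (⊤ : ℕ∞)
      (fun q => enr (Rp / (γp - 1)) γp ρp up q + enr (Rm / (γm - 1)) γm ρm um q) :=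
    (contDiff_enr hρp hup hposp).add (contDiff_enr hρm hum hposm)
  have hE' : E = fun s => ∫ x in Q3,
      (enr (Rp / (γp - 1)) γp ρp up (s, x) + enr (Rm / (γm - 1)) γm ρm um (s, x)) := by
    funext s
    rw [hE s]
    apply setIntegral_congr_fun measurableSet_Q3
    intro x _
    simp only [enr]
    ring
  have hder : ∀ t, HasDerivAt E
      (∫ x in Q3, dtd (fun q => enr (Rp / (γp - 1)) γp ρp up q
        + enr (Rm / (γm - 1)) γm ρm um q) (t, x)) t := by
    intro t
    rw [hE']
    exact hasDerivAt_setIntegral _ hEtotc t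
  -- smoothness facts for integrability
  have hFt : ∀ j : Fin 3, ContDiff ℝ (⊤ : ℕ∞) (fun q =>
      flx (Rp / (γp - 1)) γp μp lamp ρp up j q + flx (Rm / (γm - 1)) γm μm lamm ρm um j q) :=
    fun j => (contDiff_flx hρp hup hposp j).add (contDiff_flx hρm hum hposm j)
  have hFtper : ∀ (j : Fin 3) (t : ℝ) (x : V3) (i : Fin 3),
      (flx (Rp / (γp - 1)) γp μp lamp ρp up j (t, x + Pi.single i 1)
        + flx (Rm / (γm - 1)) γm μm lamm ρm um j (t, x + Pi.single i 1))
      = flx (Rp / (γp - 1)) γp μp lamp ρp up j (t, x)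
        + flx (Rm / (γm - 1)) γm μm lamm ρm um j (t, x) := by
    intro j t x i
    rw [flx_per hρp hup hperρp hperup j t x i, flx_per hρm hum hperρm hperum j t x i]
  have hAc : ContDiff ℝ (⊤ : ℕ∞) (fun p => ∑ j, dxd j (fun q =>
      flx (Rp / (γp - 1)) γp μp lamp ρp up j q
        + flx (Rm / (γm - 1)) γm μm lamm ρm um j q) p) :=
    ContDiff.sum fun j _ => contDiff_dxd (hFt j) j
  have hDc : ContDiff ℝ (⊤ : ℕ∞) (fun p => dsp μp lamp up p + dsp μm lamm um p) :=
    (contDiff_dsp hup).add (contDiff_dsp hum)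
  have hCc : ContDiff ℝ (⊤ : ℕ∞) (fun p => ρp p * ρm p * ∑ i, (up p i - um p i) ^ 2) :=
    (hρp.mul hρm).mul (ContDiff.sum fun i _ =>
      ((contDiff_comp_apply hup i).sub (contDiff_comp_apply hum i)).pow 2)
  -- the value of the derivative
  have hval : ∀ t, (∫ x in Q3, dtd (fun q => enr (Rp / (γp - 1)) γp ρp up q
        + enr (Rm / (γm - 1)) γm ρm um q) (t, x))
      = -((∫ x in Q3,
            (μp / 2 * ∑ i, ∑ j, (dxd j (fun r => up r i) (t, x)
                + dxd i (fun r => up r j) (t, x)) ^ 2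
              + lamp * (∑ j, dxd j (fun r => up r j) (t, x)) ^ 2
              + μm / 2 * ∑ i, ∑ j, (dxd j (fun r => um r i) (t, x)
                + dxd i (fun r => um r j) (t, x)) ^ 2
              + lamm * (∑ j, dxd j (fun r => um r j) (t, x)) ^ 2))
          + σ * ∫ x in Q3,
              ρp (t, x) * ρm (t, x) * ∑ i, (up (t, x) i - um (t, x) i) ^ 2) := by
    intro t
    -- pointwise identity
    have hpt : ∀ x : V3, dtd (fun q => enr (Rp / (γp - 1)) γp ρp up q
          + enr (Rm / (γm - 1)) γm ρm um q) (t, x)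
        = -(∑ j, dxd j (fun q => flx (Rp / (γp - 1)) γp μp lamp ρp up j q
            + flx (Rm / (γm - 1)) γm μm lamm ρm um j q) (t, x))
          - (dsp μp lamp up (t, x) + dsp μm lamm um (t, x))
          - σ * (ρp (t, x) * ρm (t, x) * ∑ i, (up (t, x) i - um (t, x) i) ^ 2) := by
      intro x
      have h1 := Hp (t, x)
      have h2 := Hm (t, x)
      have h3 : dtd (fun q => enr (Rp / (γp - 1)) γp ρp up q
            + enr (Rm / (γm - 1)) γm ρm um q) (t, x)
          = dtd (enr (Rp / (γp - 1)) γp ρp up) (t, x)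
            + dtd (enr (Rm / (γm - 1)) γm ρm um) (t, x) := by
        simp only [dtd_eq]
        exact dd_add (((contDiff_enr hρp hup hposp).differentiable (by simp)).differentiableAt)
          (((contDiff_enr hρm hum hposm).differentiable (by simp)).differentiableAt)
      have h4 : ∀ j : Fin 3, dxd j (fun q => flx (Rp / (γp - 1)) γp μp lamp ρp up j q
            + flx (Rm / (γm - 1)) γm μm lamm ρm um j q) (t, x)
          = dxd j (flx (Rp / (γp - 1)) γp μp lamp ρp up j) (t, x)
            + dxd j (flx (Rm / (γm - 1)) γm μm lamm ρm um j) (t, x) := by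
        intro j
        simp only [dxd_eq]
        exact dd_add (((contDiff_flx hρp hup hposp j).differentiable (by simp)).differentiableAt)
          (((contDiff_flx hρm hum hposm j).differentiable (by simp)).differentiableAt)
      rw [h3]
      simp only [h4, Fin.sum_univ_three] at h1 h2 ⊢
      linear_combination h1 + h2
    have iA : IntegrableOn (fun x => ∑ j, dxd j (fun q =>
        flx (Rp / (γp - 1)) γp μp lamp ρp up j q
          + flx (Rm / (γm - 1)) γm μm lamm ρm um j q) (t, x)) Q3 volume :=
      (contDiff_slice_x hAc t).continuous.continuousOn.integrableOn_compact isCompact_Q3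
    have iD : IntegrableOn (fun x => dsp μp lamp up (t, x) + dsp μm lamm um (t, x)) Q3 volume :=
      (contDiff_slice_x hDc t).continuous.continuousOn.integrableOn_compact isCompact_Q3
    have iC : IntegrableOn (fun x =>
        ρp (t, x) * ρm (t, x) * ∑ i, (up (t, x) i - um (t, x) i) ^ 2) Q3 volume :=
      (contDiff_slice_x hCc t).continuous.continuousOn.integrableOn_compact isCompact_Q3
    have hzero : (∫ x in Q3, ∑ j, dxd j (fun q =>
        flx (Rp / (γp - 1)) γp μp lamp ρp up j q
          + flx (Rm / (γm - 1)) γm μm lamm ρm um j q) (t, x)) = 0 :=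
      integral_sum_dxd_zero _ hFt hFtper t
    have hDD : (∫ x in Q3, (dsp μp lamp up (t, x) + dsp μm lamm um (t, x)))
        = ∫ x in Q3,
            (μp / 2 * ∑ i, ∑ j, (dxd j (fun r => up r i) (t, x)
                + dxd i (fun r => up r j) (t, x)) ^ 2
              + lamp * (∑ j, dxd j (fun r => up r j) (t, x)) ^ 2
              + μm / 2 * ∑ i, ∑ j, (dxd j (fun r => um r i) (t, x)
                + dxd i (fun r => um r j) (t, x)) ^ 2
              + lamm * (∑ j, dxd j (fun r => um r j) (t, x)) ^ 2) := by
      apply setIntegral_congr_fun measurableSet_Q3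
      intro x _
      simp only [dsp]
      ring
    calc ∫ x in Q3, dtd (fun q => enr (Rp / (γp - 1)) γp ρp up q
          + enr (Rm / (γm - 1)) γm ρm um q) (t, x)
        = ∫ x in Q3, (-(∑ j, dxd j (fun q => flx (Rp / (γp - 1)) γp μp lamp ρp up j q
            + flx (Rm / (γm - 1)) γm μm lamm ρm um j q) (t, x))
          - (dsp μp lamp up (t, x) + dsp μm lamm um (t, x))
          - σ * (ρp (t, x) * ρm (t, x) * ∑ i, (up (t, x) i - um (t, x) i) ^ 2)) :=
          setIntegral_congr_fun measurableSet_Q3 (fun x _ => hpt x)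
      _ = -((∫ x in Q3, ∑ j, dxd j (fun q => flx (Rp / (γp - 1)) γp μp lamp ρp up j q
            + flx (Rm / (γm - 1)) γm μm lamm ρm um j q) (t, x)))
          - (∫ x in Q3, (dsp μp lamp up (t, x) + dsp μm lamm um (t, x)))
          - σ * ∫ x in Q3,
              ρp (t, x) * ρm (t, x) * ∑ i, (up (t, x) i - um (t, x) i) ^ 2 := by
          have e1 := integral_sub (μ := volume.restrict Q3) ((iA.neg).sub iD) (iC.const_mul σ)
          have e2 := integral_sub (μ := volume.restrict Q3) iA.neg iD
          simp only [Pi.sub_apply, Pi.neg_apply] at e1 e2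
          rw [e1, e2, integral_neg, integral_const_mul]
      _ = _ := by rw [hzero, hDD]; ring
  have key : ∀ t, HasDerivAt E
      (-((∫ x in Q3,
          (μp / 2 * ∑ i, ∑ j, (dxd j (fun r => up r i) (t, x)
              + dxd i (fun r => up r j) (t, x)) ^ 2
            + lamp * (∑ j, dxd j (fun r => up r j) (t, x)) ^ 2
            + μm / 2 * ∑ i, ∑ j, (dxd j (fun r => um r i) (t, x)
              + dxd i (fun r => um r j) (t, x)) ^ 2
            + lamm * (∑ j, dxd j (fun r => um r j) (t, x)) ^ 2))
        + σ * ∫ x in Q3,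
            ρp (t, x) * ρm (t, x) * ∑ i, (up (t, x) i - um (t, x) i) ^ 2)) t :=
    fun t => hval t ▸ hder t
  refine ⟨key, ?_⟩
  have hdiff : Differentiable ℝ E := fun t => (key t).differentiableAt
  have hnonpos : ∀ t, deriv E t ≤ 0 := by
    intro t
    rw [(key t).deriv]
    have h1 : 0 ≤ ∫ x in Q3,
        (μp / 2 * ∑ i, ∑ j, (dxd j (fun r => up r i) (t, x)
            + dxd i (fun r => up r j) (t, x)) ^ 2
          + lamp * (∑ j, dxd j (fun r => up r j) (t, x)) ^ 2
          + μm / 2 * ∑ i, ∑ j, (dxd j (fun r => um r i) (t, x)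
            + dxd i (fun r => um r j) (t, x)) ^ 2
          + lamm * (∑ j, dxd j (fun r => um r j) (t, x)) ^ 2) := by
      apply setIntegral_nonneg measurableSet_Q3
      intro x _
      have a1 : 0 ≤ μp / 2 * ∑ i, ∑ j, (dxd j (fun r => up r i) (t, x)
            + dxd i (fun r => up r j) (t, x)) ^ 2
          + lamp * (∑ j, dxd j (fun r => up r j) (t, x)) ^ 2 :=
        diss_nonneg hμp hlamp (fun i j => dxd j (fun r => up r i) (t, x))
      have a2 : 0 ≤ μm / 2 * ∑ i, ∑ j, (dxd j (fun r => um r i) (t, x)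
            + dxd i (fun r => um r j) (t, x)) ^ 2
          + lamm * (∑ j, dxd j (fun r => um r j) (t, x)) ^ 2 :=
        diss_nonneg hμm hlamm (fun i j => dxd j (fun r => um r i) (t, x))
      linarith
    have h2 : 0 ≤ ∫ x in Q3,
        ρp (t, x) * ρm (t, x) * ∑ i, (up (t, x) i - um (t, x) i) ^ 2 := by
      apply setIntegral_nonneg measurableSet_Q3
      intro x _
      exact mul_nonneg (mul_nonneg (hposp _).le (hposm _).le)
        (Finset.sum_nonneg fun i _ => sq_nonneg _)
    have := mul_nonneg hσ.le h2
    linarith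
  have hanti : Antitone E := antitone_of_deriv_nonpos hdiff hnonpos
  exact fun s t hst => hanti hst
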